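/- Let X be a set and let G be the group presented by generators X and relators {x^2 : x ∈ X} (the free product of copies of Z/2 indexed by X). Then for any two distinct generators x, y ∈ X and any element u of the subgroup of G generated by the images of x and y, there exists an odd natural number m ≥ 1 such that the element x·u·y·u⁻¹ of G is conjugate in G to (y·x)^m. -/
import Mathlib

theorem aux_dihedral {G : Type*} [Group G] (a b : G) (ha : a ^ 2 = 1) (hb : b ^ 2 = 1)
    (u : G) (hu : u ∈ Subgroup.closure ({a, b} : Set G)) :
    ∃ m : ℕ, 1 ≤ m ∧ Odd m ∧ IsConj (a * u * b * u⁻¹) ((b * a) ^ m) := by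
  have hainv : a⁻¹ = a := by rw [inv_eq_iff_mul_eq_one, ← pow_two]; exact ha
  have hbinv : b⁻¹ = b := by rw [inv_eq_iff_mul_eq_one, ← pow_two]; exact hb
  set t := b * a with ht
  have htinv : t⁻¹ = a * b := by rw [ht, mul_inv_rev, hainv, hbinv]
  have hconj : ∀ k : ℤ, a * t ^ k * a = t ^ (-k) := by
    intro k
    have h1 : a * t * a⁻¹ = t⁻¹ := by
      rw [hainv, htinv, ht]
      group
      rw [mul_assoc, ← pow_two, ha, mul_one]
    calc a * t ^ k * a = a * t ^ k * a⁻¹ := by rw [hainv]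
      _ = (a * t * a⁻¹) ^ k := by rw [← conj_zpow]
      _ = (t⁻¹) ^ k := by rw [h1]
      _ = t ^ (-k) := by rw [inv_zpow, zpow_neg]
  have hswap : ∀ j : ℤ, a * t ^ j = t ^ (-j) * a := by
    intro j
    rw [← hconj j, mul_assoc, mul_assoc, ← pow_two, ha, mul_one]
  -- structure of elements of the closure
  have hstruct : ∃ k : ℤ, u = t ^ k ∨ u = t ^ k * a := by
    induction hu using Subgroup.closure_induction with
    | mem z hz =>
      rcases hz with rfl | rfl
      · exact ⟨0, Or.inr (by group)⟩
      · exact ⟨1, Or.inr (by rw [zpow_one, ht, mul_assoc, ← pow_two, ha, mul_one])⟩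
    | one => exact ⟨0, Or.inl (by group)⟩
    | mul v w _ _ hv hw =>
      obtain ⟨k, hk⟩ := hv
      obtain ⟨j, hj⟩ := hw
      rcases hk with rfl | rfl <;> rcases hj with rfl | rfl
      · exact ⟨k + j, Or.inl (by rw [zpow_add])⟩
      · exact ⟨k + j, Or.inr (by rw [zpow_add, mul_assoc])⟩
      · refine ⟨k - j, Or.inr ?_⟩
        rw [mul_assoc, hswap j, ← mul_assoc, ← zpow_add, ← sub_eq_add_neg]
      · refine ⟨k - j, Or.inl ?_⟩
        calc t ^ k * a * (t ^ j * a) = t ^ k * (a * t ^ j) * a := by group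
          _ = t ^ k * (t ^ (-j) * a) * a := by rw [hswap j]
          _ = t ^ (k - j) * (a * a) := by rw [sub_eq_add_neg, zpow_add]; group
          _ = t ^ (k - j) := by rw [← pow_two, ha, mul_one]
    | inv v _ hv =>
      obtain ⟨k, hk⟩ := hv
      rcases hk with rfl | rfl
      · exact ⟨-k, Or.inl (by rw [← zpow_neg])⟩
      · refine ⟨k, Or.inr ?_⟩
        rw [mul_inv_rev, hainv, ← zpow_neg, hswap (-k), neg_neg]
  -- compute a * u * b * u⁻¹ as an odd power of t
  obtain ⟨k, hk⟩ := hstruct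
  have hb_eq : b = t * a := by rw [ht, mul_assoc, ← pow_two, ha, mul_one]
  have key : ∃ n : ℤ, Odd n ∧ a * u * b * u⁻¹ = t ^ n := by
    rcases hk with rfl | rfl
    · refine ⟨-(2 * k + 1), ⟨-(k + 1), by ring⟩, ?_⟩
      calc a * t ^ k * b * (t ^ k)⁻¹ = (a * t ^ (k + 1) * a) * t ^ (-k) := by
            rw [hb_eq, zpow_add, zpow_one, ← zpow_neg]; group
        _ = t ^ (-(k+1)) * t ^ (-k) := by rw [hconj]
        _ = t ^ (-(k+1) + -k) := by rw [← zpow_add]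
        _ = t ^ (-(2 * k + 1)) := by congr 1; ring
    · refine ⟨1 - 2 * k, ⟨-k, by ring⟩, ?_⟩
      have hinv : (t ^ k * a)⁻¹ = a * t ^ (-k) := by
        rw [mul_inv_rev, hainv, ← zpow_neg]
      calc a * (t ^ k * a) * b * (t ^ k * a)⁻¹
          = (a * t ^ k * a) * (b * a) * t ^ (-k) := by rw [hinv]; group
        _ = t ^ (-k) * t * t ^ (-k) := by rw [hconj, ← ht]
        _ = t ^ (-k + 1 + -k) := by rw [zpow_add, zpow_add, zpow_one]
        _ = t ^ (1 - 2 * k) := by congr 1; ring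
  obtain ⟨n, hodd, heq⟩ := key
  refine ⟨n.natAbs, ?_, ?_, ?_⟩
  · have hne : n ≠ 0 := by rintro rfl; exact (Int.not_odd_iff_even.mpr Even.zero) hodd
    exact Int.natAbs_pos.mpr hne
  · exact Int.natAbs_odd.mpr hodd
  · rw [heq]
    show IsConj (t ^ n) (t ^ n.natAbs)
    rcases le_or_gt 0 n with hn | hn
    · have : t ^ n = t ^ (n.natAbs : ℕ) := by
        rw [← zpow_natCast, Int.natAbs_of_nonneg hn]
      rw [this]
    · have hn' : ((n.natAbs : ℤ)) = -n := by omega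
      rw [isConj_iff]
      refine ⟨a, ?_⟩
      rw [hainv, hconj n, ← zpow_natCast, hn']

theorem sq_one (X : Type*) (z : X) :
    (PresentedGroup.of (rels := Set.range fun w : X => FreeGroup.of w ^ 2) z) ^ 2 = 1 := by
  have h : ((FreeGroup.of z) ^ 2 : FreeGroup X) ∈
      Subgroup.normalClosure (Set.range fun w : X => FreeGroup.of w ^ 2) :=
    Subgroup.subset_normalClosure ⟨z, rfl⟩
  exact (QuotientGroup.eq_one_iff _).mpr h

theorem stmt_0 (X : Type*) (x y : X) (hxy : x ≠ y)
    (u : PresentedGroup (Set.range fun z : X => FreeGroup.of z ^ 2))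
    (hu : u ∈ Subgroup.closure ({PresentedGroup.of x, PresentedGroup.of y} :
      Set (PresentedGroup (Set.range fun z : X => FreeGroup.of z ^ 2)))) :
    ∃ m : ℕ, 1 ≤ m ∧ Odd m ∧
      IsConj (PresentedGroup.of x * u * PresentedGroup.of y * u⁻¹)
        ((PresentedGroup.of y * PresentedGroup.of x) ^ m) := by
  exact aux_dihedral _ _ (sq_one X x) (sq_one X y) u hu
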